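/- If a scoring method f satisfies order preservation, then for any ranking problem (R,M) in which all players have played the same number of matches, f_i(R,M) ≥ f_j(R,M) together with f_i(-R,M) > f_j(-R,M) leads to f_i(O,2M) > f_j(O,2M); consequently, if f additionally satisfies symmetry, then f_i(R,M) ≥ f_j(R,M) implies f_i(-R,M) ≤ f_j(-R,M) on such balanced ranking problems. -/

import Mathlib

open Finset

/-- A ranking problem: skew-symmetric results matrix `R`, symmetric
nonnegative-integer matches matrix `M`, with `|R i j| ≤ M i j`. -/
structure RP (n : ℕ) where
  R : Fin n → Fin n → ℝ
  M : Fin n → Fin n → ℕ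
  skew : ∀ i j, R j i = - R i j
  symm : ∀ i j, M j i = M i j
  bound : ∀ i j, |R i j| ≤ (M i j : ℝ)

/-- Sum of two ranking problems. -/
def RP.add {n : ℕ} (P Q : RP n) : RP n where
  R i j := P.R i j + Q.R i j
  M i j := P.M i j + Q.M i j
  skew i j := by rw [P.skew i j, Q.skew i j]; ring
  symm i j := by rw [P.symm i j, Q.symm i j]
  bound i j := by
    calc |P.R i j + Q.R i j| ≤ |P.R i j| + |Q.R i j| := abs_add_le _ _
      _ ≤ (P.M i j : ℝ) + (Q.M i j : ℝ) := add_le_add (P.bound i j) (Q.bound i j)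
      _ = ((P.M i j + Q.M i j : ℕ) : ℝ) := by push_cast; ring

/-- The ranking problem with all results reversed. -/
def RP.neg {n : ℕ} (P : RP n) : RP n where
  R i j := - P.R i j
  M := P.M
  skew i j := by rw [P.skew i j]
  symm := P.symm
  bound i j := by simpa using P.bound i j

/-- Relabelling the players by a permutation. -/
def RP.relabel {n : ℕ} (σ : Equiv.Perm (Fin n)) (P : RP n) : RP n where
  R i j := P.R (σ.symm i) (σ.symm j)
  M i j := P.M (σ.symm i) (σ.symm j)
  skew i j := P.skew _ _
  symm i j := P.symm _ _
  bound i j := P.bound _ _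

/-- All players have played `m` matches. -/
def RPBalanced {n : ℕ} (P : RP n) (m : ℕ) : Prop := ∀ i, ∑ j, P.M i j = m

/-- Symmetry (SYM): if all results are draws, all scores are equal. -/
def SYM {n : ℕ} (f : RP n → Fin n → ℝ) : Prop :=
  ∀ P : RP n, (∀ i j, P.R i j = 0) → ∀ i j, f P i = f P j

/-- Inversion (INV). -/
def INV {n : ℕ} (f : RP n → Fin n → ℝ) : Prop :=
  ∀ P : RP n, ∀ i j, f P i ≥ f P j ↔ f P.neg i ≤ f P.neg j

/-- Order preservation (OP). -/
def OP {n : ℕ} (f : RP n → Fin n → ℝ) : Prop :=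
  ∀ P Q : RP n, ∀ m m' : ℕ, RPBalanced P m → RPBalanced Q m' →
    ∀ i j, f P i ≥ f P j → f Q i ≥ f Q j →
      f (P.add Q) i ≥ f (P.add Q) j ∧
      ((f P i > f P j ∨ f Q i > f Q j) → f (P.add Q) i > f (P.add Q) j)

/-- Strong order preservation (SOP). -/
def SOP {n : ℕ} (f : RP n → Fin n → ℝ) : Prop :=
  ∀ P Q : RP n, ∀ i j, f P i ≥ f P j → f Q i ≥ f Q j →
      f (P.add Q) i ≥ f (P.add Q) j ∧
      ((f P i > f P j ∨ f Q i > f Q j) → f (P.add Q) i > f (P.add Q) j)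

/-- Neutrality (NEU). -/
def NEU {n : ℕ} (f : RP n → Fin n → ℝ) : Prop :=
  ∀ σ : Equiv.Perm (Fin n), ∀ P : RP n, ∀ i, f P i = f (P.relabel σ) (σ i)

/-- Independence of irrelevant matches (IIM). -/
def IIM {n : ℕ} (f : RP n → Fin n → ℝ) : Prop :=
  ∀ P Q : RP n, ∀ i j k l : Fin n,
    i ≠ k → i ≠ l → j ≠ k → j ≠ l → i ≠ j → k ≠ l →
    (∀ a b, ¬((a = k ∧ b = l) ∨ (a = l ∧ b = k)) → P.R a b = Q.R a b ∧ P.M a b = Q.M a b) →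
    f P i ≥ f P j → f Q i ≥ f Q j

/-- A decomposition of a ranking problem into per-match results:
match `t` between `a` and `b` (for `t < M a b`) has result `res a b t ∈ [-1,1]`,
and the results sum to `R a b`. -/
structure RP.Decomp {n : ℕ} (P : RP n) where
  res : Fin n → Fin n → ℕ → ℝ
  skew : ∀ a b t, res b a t = - res a b t
  bound : ∀ a b t, t < P.M a b → |res a b t| ≤ 1
  sum : ∀ a b, ∑ t ∈ Finset.range (P.M a b), res a b t = P.R a b

/-- The opponent multiset of player `i`: `M i k` copies of each `k`. -/
def RP.Matches {n : ℕ} (P : RP n) (i : Fin n) := Σ k : Fin n, Fin (P.M i k)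

/-- Self-consistency (SC): if there is a bijection between the opponent
multisets of `i` and `j` matching each match of `i` to a match of `j` with a
weakly smaller per-match result against a weakly weaker opponent, then
`f i ≥ f j`, strictly if some comparison is strict. -/
def SC {n : ℕ} (f : RP n → Fin n → ℝ) : Prop :=
  ∀ P : RP n, ∀ d : P.Decomp, ∀ i j : Fin n, ∀ e : P.Matches i ≃ P.Matches j,
    (∀ m : P.Matches i,
      d.res i m.1 m.2.1 ≥ d.res j (e m).1 (e m).2.1 ∧ f P m.1 ≥ f P (e m).1) →
    f P i ≥ f P j ∧
    ((∃ m : P.Matches i,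
        d.res i m.1 m.2.1 > d.res j (e m).1 (e m).2.1 ∨ f P m.1 > f P (e m).1) →
      f P i > f P j)

theorem RPBalanced.neg {n m : ℕ} {P : RP n} (h : RPBalanced P m) : RPBalanced P.neg m := h

theorem RP.add_neg_R {n : ℕ} (P : RP n) (i j : Fin n) : (P.add P.neg).R i j = 0 :=
  add_neg_cancel (P.R i j)

theorem OP.add_neg_gt {n m : ℕ} {f : RP n → Fin n → ℝ} (hOP : OP f) {P : RP n}
    (hB : RPBalanced P m) {i j : Fin n} (hP : f P i ≥ f P j) (hneg : f P.neg i > f P.neg j) :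
    f (P.add P.neg) i > f (P.add P.neg) j :=
  (hOP P P.neg m m hB hB.neg i j hP hneg.le).2 (Or.inr hneg)

theorem op_balanced_inversion {n : ℕ} (f : RP n → Fin n → ℝ) (hOP : OP f) :
    (∀ P : RP n, ∀ m : ℕ, RPBalanced P m → ∀ i j : Fin n,
      f P i ≥ f P j → f P.neg i > f P.neg j →
        f (P.add P.neg) i > f (P.add P.neg) j) ∧
    (SYM f → ∀ P : RP n, ∀ m : ℕ, RPBalanced P m → ∀ i j : Fin n,
      f P i ≥ f P j → f P.neg i ≤ f P.neg j) := by
  refine ⟨fun P m hB i j => hOP.add_neg_gt hB, fun hSYM P m hB i j hP => ?_⟩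
  by_contra! hneg
  have hgt := hOP.add_neg_gt hB hP hneg
  have heq := hSYM (P.add P.neg) P.add_neg_R i j
  exact hgt.ne' heq
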